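/- Let (Q_T, I_T) be the bound quiver arising from an (m+2)-angulation T of a marked surface, and Λ_T = kQ_T/I_T. Then: (1) Λ_T is a gentle algebra; (2) the only possible saturated cycles in (Q_T, I_T) are (m+2)-cycles; (3) there can be at most m − 1 consecutive zero-relations not lying on a saturated cycle. -/

import Mathlib

set_option autoImplicit false
set_option maxHeartbeats 1000000
set_option linter.unusedSectionVars false
set_option linter.unusedVariables false

noncomputable section

/-! ### Quivers, paths and path algebras -/

section Quivers

/-- A finite quiver. -/
structure QuivData : Type 1 where
  V : Type
  A : Type
  [fV : Fintype V]
  [fA : Fintype A]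
  [dV : DecidableEq V]
  [dA : DecidableEq A]
  src : A → V
  tgt : A → V

attribute [instance] QuivData.fV QuivData.fA QuivData.dV QuivData.dA

namespace QuivData

variable (Q : QuivData)

/-- A (possibly trivial) path: a composable sequence of arrows. -/
def IsPath (l : List Q.A) : Prop := l.Chain' (fun a b => Q.tgt a = Q.src b)

/-- A nonempty cyclic path. -/
def IsCycle (l : List Q.A) : Prop := l ≠ [] ∧ (l ++ l).Chain' (fun a b => Q.tgt a = Q.src b)

/-- A path from the vertex `j` to the vertex `i` (the trivial path only when `i = j`). -/
def IsPathFromTo (j i : Q.V) (l : List Q.A) : Prop :=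
  Q.IsPath l ∧ (∀ a ∈ l.head?, Q.src a = j) ∧ (∀ a ∈ l.getLast?, Q.tgt a = i) ∧
    (l = [] → i = j)

/-- The set of cyclic subpaths of length `r` of the cyclic path `c` (subpaths of the
infinite repetition of `c`). -/
def cycSub (c : List Q.A) (r : ℕ) : Set (List Q.A) :=
  { l | ∃ s < c.length, l = (List.flatten (List.replicate (r / c.length + 1) (c.rotate s))).take r }

end QuivData

variable (k : Type) [Field k]

/-- The defining relations of the path algebra of `Q`, on the free algebra on
vertices and arrows: the vertices are orthogonal idempotents summing to `1`, and for
an arrow `a : i → j` we have `e_i * a = a = a * e_j` (paths compose left-to-right). -/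
inductive PathRel (Q : QuivData) :
    FreeAlgebra k (Q.V ⊕ Q.A) → FreeAlgebra k (Q.V ⊕ Q.A) → Prop
  | vtx (i j : Q.V) : PathRel Q (FreeAlgebra.ι k (Sum.inl i) * FreeAlgebra.ι k (Sum.inl j))
      (if i = j then FreeAlgebra.ι k (Sum.inl i) else 0)
  | src_id (a : Q.A) : PathRel Q
      (FreeAlgebra.ι k (Sum.inl (Q.src a)) * FreeAlgebra.ι k (Sum.inr a))
      (FreeAlgebra.ι k (Sum.inr a))
  | tgt_id (a : Q.A) : PathRel Q
      (FreeAlgebra.ι k (Sum.inr a) * FreeAlgebra.ι k (Sum.inl (Q.tgt a)))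
      (FreeAlgebra.ι k (Sum.inr a))
  | one_eq : PathRel Q (∑ i : Q.V, FreeAlgebra.ι k (Sum.inl i)) 1

/-- The path algebra `kQ`. -/
def PathAlg (Q : QuivData) : Type := RingQuot (PathRel k Q)

instance (Q : QuivData) : Ring (PathAlg k Q) := inferInstanceAs (Ring (RingQuot (PathRel k Q)))

instance (Q : QuivData) : Algebra k (PathAlg k Q) :=
  inferInstanceAs (Algebra k (RingQuot (PathRel k Q)))

/-- The idempotent of the path algebra at a vertex. -/
def vtxElem (Q : QuivData) (i : Q.V) : PathAlg k Q :=
  RingQuot.mkAlgHom k (PathRel k Q) (FreeAlgebra.ι k (Sum.inl i))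

/-- The element of the path algebra given by an arrow. -/
def arrElem (Q : QuivData) (a : Q.A) : PathAlg k Q :=
  RingQuot.mkAlgHom k (PathRel k Q) (FreeAlgebra.ι k (Sum.inr a))

/-- The element of the path algebra given by a nonempty path. -/
def pathElem (Q : QuivData) (l : List Q.A) : PathAlg k Q := (l.map (arrElem k Q)).prod

/-- The element of the path algebra given by a path, the trivial path being taken at
the vertex `v`. -/
def pathElemAt (Q : QuivData) (v : Q.V) (l : List Q.A) : PathAlg k Q :=
  if l.isEmpty then vtxElem k Q v else pathElem k Q l

/-! ### Monomial algebras -/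

/-- The monomial algebra `kQ/I` where `I = ⟨F⟩` is generated by the set `F` of
paths (zero-relations). -/
def MonAlg (Q : QuivData) (F : Set (List Q.A)) : Type :=
  RingQuot (fun x y : PathAlg k Q => y = 0 ∧ ∃ l ∈ F, x = pathElem k Q l)

instance (Q : QuivData) (F : Set (List Q.A)) : Ring (MonAlg k Q F) :=
  inferInstanceAs (Ring (RingQuot _))

instance (Q : QuivData) (F : Set (List Q.A)) : Algebra k (MonAlg k Q F) :=
  inferInstanceAs (Algebra k (RingQuot _))

/-- The image of a vertex idempotent in the monomial algebra. -/
def MonAlg.vtx (Q : QuivData) (F : Set (List Q.A)) (i : Q.V) : MonAlg k Q F :=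
  RingQuot.mkAlgHom k _ (vtxElem k Q i)

/-- The ideal generated by the set of paths `F` is admissible: all zero-relations
have length at least two, and every sufficiently long path contains a zero-relation,
so that `R_Q^n ⊆ ⟨F⟩ ⊆ R_Q^2`. -/
def MonAdmissible (Q : QuivData) (F : Set (List Q.A)) : Prop :=
  (∀ l ∈ F, Q.IsPath l ∧ 2 ≤ l.length) ∧
    ∃ n : ℕ, ∀ l : List Q.A, Q.IsPath l → l.length = n → ∃ f ∈ F, f <:+: l

/-- `F` is a minimal set of generators of the monomial ideal: no generator is a
proper subpath of another. -/
def MonMinimal (Q : QuivData) (F : Set (List Q.A)) : Prop :=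
  ∀ f ∈ F, ∀ g ∈ F, g <:+: f → g = f

/-! ### Quivers with potential and Jacobian algebras -/

/-- The cyclic derivative `∂_a c` of a cycle `c` with respect to an arrow `a`:
`∂_a (α₁ ⋯ α_n) = ∑_{α_i = a} α_{i+1} ⋯ α_n α₁ ⋯ α_{i-1}`. -/
def cycDeriv (Q : QuivData) (a : Q.A) (l : List Q.A) : PathAlg k Q :=
  ∑ i : Fin l.length, if l.get i = a then pathElem k Q ((l.rotate (i.1 + 1)).dropLast) else 0

/-- The cyclic derivative of a potential `W` (a finite linear combination of cycles)
with respect to an arrow. -/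
def potDeriv (Q : QuivData) (W : List Q.A →₀ k) (a : Q.A) : PathAlg k Q :=
  ∑ l ∈ W.support, W l • cycDeriv k Q a l

/-- The Jacobian algebra of a quiver with potential `(Q, W)`: the quotient of the
path algebra by the ideal generated by the cyclic derivatives of `W`. -/
def JacAlg (Q : QuivData) (W : List Q.A →₀ k) : Type :=
  RingQuot (fun x y : PathAlg k Q => y = 0 ∧ ∃ a : Q.A, x = potDeriv k Q W a)

instance (Q : QuivData) (W : List Q.A →₀ k) : Ring (JacAlg k Q W) :=
  inferInstanceAs (Ring (RingQuot _))

instance (Q : QuivData) (W : List Q.A →₀ k) : Algebra k (JacAlg k Q W) :=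
  inferInstanceAs (Algebra k (RingQuot _))

/-- `Λ` is a Jacobian algebra: it is isomorphic to the Jacobian algebra of some
quiver with potential (a linear combination of cycles). -/
def IsJacobianAlgebra (Λ : Type) [Ring Λ] [Algebra k Λ] : Prop :=
  ∃ (Q : QuivData) (W : List Q.A →₀ k),
    (∀ l ∈ W.support, Q.IsCycle l) ∧ Nonempty (Λ ≃ₐ[k] JacAlg k Q W)

/-! ### Hyperpotentials -/

/-- `ρ` is a hyperpotential on `Q`: for each arrow `a : i → j`, `ρ a` is a linear
combination of paths from `j` to `i`, and `∑ₐ [a, ρ a] = 0`. -/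
def IsHyperpotential (Q : QuivData) (ρ : Q.A → PathAlg k Q) : Prop :=
  (∀ a : Q.A, ρ a ∈ Submodule.span k
    {x : PathAlg k Q | ∃ l : List Q.A, Q.IsPathFromTo (Q.tgt a) (Q.src a) l ∧
      x = pathElemAt k Q (Q.tgt a) l}) ∧
  (∑ a : Q.A, (arrElem k Q a * ρ a - ρ a * arrElem k Q a)) = 0

/-- The Jacobian algebra of a hyperpotential. -/
def HypJacAlg (Q : QuivData) (ρ : Q.A → PathAlg k Q) : Type :=
  RingQuot (fun x y : PathAlg k Q => y = 0 ∧ ∃ a : Q.A, x = ρ a)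

instance (Q : QuivData) (ρ : Q.A → PathAlg k Q) : Ring (HypJacAlg k Q ρ) :=
  inferInstanceAs (Ring (RingQuot _))

instance (Q : QuivData) (ρ : Q.A → PathAlg k Q) : Algebra k (HypJacAlg k Q ρ) :=
  inferInstanceAs (Algebra k (RingQuot _))

/-- `Λ` is the Jacobian algebra of a hyperpotential. -/
def IsHyperpotentialJacobian (Λ : Type) [Ring Λ] [Algebra k Λ] : Prop :=
  ∃ (Q : QuivData) (ρ : Q.A → PathAlg k Q),
    IsHyperpotential k Q ρ ∧ Nonempty (Λ ≃ₐ[k] HypJacAlg k Q ρ)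

/-! ### Gentle algebras -/

/-- A gentle bound quiver `(Q, R)`, where `R` is the set of (length two)
zero-relations. -/
structure IsGentleQuiver (Q : QuivData) (R : Set (Q.A × Q.A)) : Prop where
  /-- relations are between composable arrows -/
  composable : ∀ p ∈ R, Q.tgt p.1 = Q.src p.2
  /-- (g1): at most two arrows start at any vertex -/
  src_two : ∀ a b c : Q.A, Q.src a = Q.src b → Q.src a = Q.src c → a = b ∨ a = c ∨ b = c
  /-- (g1): at most two arrows end at any vertex -/
  tgt_two : ∀ a b c : Q.A, Q.tgt a = Q.tgt b → Q.tgt a = Q.tgt c → a = b ∨ a = c ∨ b = c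
  /-- (g3): for each `β` at most one `α` with `αβ ∈ I` -/
  rel_left_unique : ∀ α α' β : Q.A, (α, β) ∈ R → (α', β) ∈ R → α = α'
  /-- (g3): for each `β` at most one `γ` with `βγ ∈ I` -/
  rel_right_unique : ∀ α β β' : Q.A, (α, β) ∈ R → (α, β') ∈ R → β = β'
  /-- (g4): for each `β` at most one `α` with `αβ ∉ I` -/
  nonrel_left_unique : ∀ α α' β : Q.A, Q.tgt α = Q.src β → Q.tgt α' = Q.src β →
    (α, β) ∉ R → (α', β) ∉ R → α = α'
  /-- (g4): for each `β` at most one `γ` with `βγ ∉ I` -/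
  nonrel_right_unique : ∀ α β β' : Q.A, Q.tgt α = Q.src β → Q.tgt α = Q.src β' →
    (α, β) ∉ R → (α, β') ∉ R → β = β'

/-- The zero-relations of a gentle presentation, as a set of paths of length two. -/
def relPaths (Q : QuivData) (R : Set (Q.A × Q.A)) : Set (List Q.A) :=
  {l | ∃ p ∈ R, l = [p.1, p.2]}

/-- The gentle algebra `kQ/⟨R⟩`. -/
def GentleAlg (Q : QuivData) (R : Set (Q.A × Q.A)) : Type := MonAlg k Q (relPaths Q R)

instance (Q : QuivData) (R : Set (Q.A × Q.A)) : Ring (GentleAlg k Q R) :=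
  inferInstanceAs (Ring (MonAlg k Q (relPaths Q R)))

instance (Q : QuivData) (R : Set (Q.A × Q.A)) : Algebra k (GentleAlg k Q R) :=
  inferInstanceAs (Algebra k (MonAlg k Q (relPaths Q R)))

/-- The image of a vertex idempotent in a gentle algebra. -/
def GentleAlg.vtx (Q : QuivData) (R : Set (Q.A × Q.A)) (x : Q.V) : GentleAlg k Q R :=
  MonAlg.vtx k Q (relPaths Q R) x

/-- A saturated cycle (without arrow repetition): any two cyclically consecutive
arrows form a zero-relation.  A saturated loop is the case of a single loop `δ`
with `δ² ∈ I`. -/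
def IsSaturatedCycle (Q : QuivData) (R : Set (Q.A × Q.A)) (l : List Q.A) : Prop :=
  l ≠ [] ∧ l.Nodup ∧ (l ++ l).Chain' (fun a b => (a, b) ∈ R)

end Quivers

/-! ### `(m+2)`-angulations of unpunctured marked surfaces -/

section Angulations

/-- A combinatorial `(m+2)`-angulation of an oriented unpunctured marked surface:
a finite collection of `(m+2)`-gons, with sides labelled by internal arcs or boundary
segments and corners labelled by marked points, glued along internal arcs (each arc
occurs exactly twice, each boundary segment once, and the gluing is
orientation-compatible: it identifies corners as prescribed by `corner_eq_iff`).
Every marked point lies on the boundary (the surface is unpunctured). -/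
structure Angulation (m : ℕ) : Type 1 where
  /-- internal arcs -/
  Arc : Type
  /-- boundary segments -/
  Bd : Type
  /-- the `(m+2)`-gons -/
  Gon : Type
  /-- marked points -/
  Pt : Type
  [finArc : Fintype Arc]
  [finBd : Fintype Bd]
  [finGon : Fintype Gon]
  [finPt : Fintype Pt]
  [deqArc : DecidableEq Arc]
  [deqBd : DecidableEq Bd]
  [deqGon : DecidableEq Gon]
  [deqPt : DecidableEq Pt]
  /-- the sides of each gon, in clockwise cyclic order -/
  side : Gon → ZMod (m + 2) → Arc ⊕ Bd
  /-- the corner of a gon between its sides at positions `p` and `p + 1` is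
  `corner _ p`; the side at position `p` joins `corner _ p` to `corner _ (p+1)` -/
  corner : Gon → ZMod (m + 2) → Pt
  /-- every internal arc is a side of exactly two (gon, position) pairs -/
  arc_two : ∀ a : Arc,
    (Finset.univ.filter fun gp : Gon × ZMod (m + 2) => side gp.1 gp.2 = Sum.inl a).card = 2
  /-- every boundary segment is a side of exactly one (gon, position) pair -/
  bd_one : ∀ b : Bd,
    (Finset.univ.filter fun gp : Gon × ZMod (m + 2) => side gp.1 gp.2 = Sum.inr b).card = 1
  /-- marked points are exactly the corners, identified exactly along the
  orientation-reversing gluings of arcs -/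
  corner_eq_iff : ∀ s s' : Gon × ZMod (m + 2),
    corner s.1 s.2 = corner s'.1 s'.2 ↔ Relation.EqvGen
      (fun u v : Gon × ZMod (m + 2) => ∃ a : Arc,
        side u.1 u.2 = Sum.inl a ∧ side v.1 (v.2 - 1) = Sum.inl a ∧ u ≠ (v.1, v.2 - 1))
      s s'
  /-- every marked point lies on the boundary: the surface is unpunctured -/
  unpunctured : ∀ x : Pt, ∃ (G : Gon) (p : ZMod (m + 2)) (b : Bd),
    side G p = Sum.inr b ∧ (corner G p = x ∨ corner G (p + 1) = x)

attribute [instance] Angulation.finArc Angulation.finBd Angulation.finGon Angulation.finPt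
attribute [instance] Angulation.deqArc Angulation.deqBd Angulation.deqGon Angulation.deqPt

variable {m : ℕ} (T : Angulation m)

/-- An arrow of the quiver of an `(m+2)`-angulation: a gon `G` together with a
position `p` such that the sides of `G` at `p` and `p + 1` are both internal arcs;
the arrow goes from the arc at `p + 1` to the arc at `p` (`i` follows `j`
clockwise). -/
structure AngArrow {m : ℕ} (T : Angulation m) : Type where
  G : T.Gon
  p : ZMod (m + 2)
  tgtArc : T.Arc
  srcArc : T.Arc
  htgt : T.side G p = Sum.inl tgtArc
  hsrc : T.side G (p + 1) = Sum.inl srcArc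

instance : Fintype (AngArrow T) :=
  Fintype.ofInjective (fun x : AngArrow T => (x.G, x.p, x.tgtArc, x.srcArc))
    (by rintro ⟨G, p, t, s, ht, hs⟩ ⟨G', p', t', s', ht', hs'⟩ h; simp_all)

/-- The bound quiver `(Q_T, I_T)` of an `(m+2)`-angulation: vertices are the internal
arcs, with an arrow `i → j` whenever `i` and `j` are sides of the same gon sharing a
corner and `i` follows `j` clockwise. -/
def angQuiv : QuivData where
  V := T.Arc
  A := AngArrow T
  dA := Classical.decEq _
  src x := x.srcArc
  tgt x := x.tgtArc

/-- The relations of an `(m+2)`-angulation: `αβ ∈ I_T` exactly when the three arcs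
involved are sides of the same gon, i.e. the two arrows are consecutive in a gon. -/
def angRel : Set ((angQuiv T).A × (angQuiv T).A) :=
  {p | p.1.G = p.2.G ∧ p.2.p = p.1.p - 1}

/-- The zero-relations of an angulation, as paths of length two. -/
def angF : Set (List (angQuiv T).A) := relPaths (angQuiv T) (angRel T)

/-- The algebra `Λ_T = kQ_T/I_T` arising from an `(m+2)`-angulation. -/
def AngAlg (k : Type) [Field k] {m : ℕ} (T : Angulation m) : Type :=
  MonAlg k (angQuiv T) (angF T)

instance (k : Type) [Field k] : Ring (AngAlg k T) :=
  inferInstanceAs (Ring (MonAlg k (angQuiv T) (angF T)))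

instance (k : Type) [Field k] : Algebra k (AngAlg k T) :=
  inferInstanceAs (Algebra k (MonAlg k (angQuiv T) (angF T)))

/-- The Euler characteristic of the surface underlying an angulation. -/
def Angulation.euler : ℤ :=
  (Fintype.card T.Pt : ℤ) - ((Fintype.card T.Arc : ℤ) + (Fintype.card T.Bd : ℤ))
    + (Fintype.card T.Gon : ℤ)

/-- Two gons are adjacent when they share an internal arc. -/
def Angulation.GonAdj (G G' : T.Gon) : Prop :=
  ∃ (a : T.Arc) (p q : ZMod (m + 2)), T.side G p = Sum.inl a ∧ T.side G' q = Sum.inl a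

/-- The surface underlying the angulation is connected. -/
def Angulation.Connected : Prop := ∀ G G' : T.Gon, Relation.ReflTransGen T.GonAdj G G'

/-- The angulation is an `(m+2)`-angulation of a disk (the underlying oriented
surface is connected with Euler characteristic 1).  The resulting algebras are the
`m`-cluster tilted algebras of type `𝔸`. -/
def IsDiskAngulation : Prop := T.Connected ∧ T.euler = 1

/-- The angulation is an `(m+2)`-angulation of an annulus (the underlying oriented
surface is connected with nonempty boundary and Euler characteristic 0).  The
resulting algebras are the `m`-cluster tilted algebras of type `𝔸~`. -/
def IsAnnulusAngulation : Prop := T.Connected ∧ T.euler = 0 ∧ Nonempty T.Bd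

end Angulations

/-! Each arrow `x` of `Q_T` is pinned down by its gon and position, and meets its target arc
at the side `(x.G, x.p)` and its source arc at the side `(x.G, x.p + 1)`; a composable pair
`αβ` is a relation exactly when `α` and `β` meet the shared arc at the same side.  Since every
arc is a side exactly twice, gentleness is pigeonhole on two-element sets.  A chain of
relations walks backwards around a single gon, one position per arrow.  A saturated cycle
must therefore close up after a multiple of `m + 2` steps without repeating an arrow, so it
goes once around its gon; and a chain of `m + 1` relations already uses all `m + 2` sides of
its gon as internal arcs, so that gon carries a saturated cycle through every arrow of the
chain. -/

section Pigeonhole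

variable {α : Type*} [DecidableEq α] {s : Finset α} {x y z : α}

lemma Finset.eq_or_eq_or_eq_of_card_eq_two (h : s.card = 2) (hx : x ∈ s) (hy : y ∈ s)
    (hz : z ∈ s) : x = y ∨ x = z ∨ y = z := by
  obtain ⟨u, v, -, rfl⟩ := Finset.card_eq_two.mp h
  simp only [Finset.mem_insert, Finset.mem_singleton] at hx hy hz
  rcases hx with rfl | rfl <;> rcases hy with rfl | rfl <;> rcases hz with rfl | rfl <;> tauto

lemma Finset.eq_of_ne_of_ne_of_card_eq_two (h : s.card = 2) (hx : x ∈ s) (hy : y ∈ s)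
    (hz : z ∈ s) (hxz : x ≠ z) (hyz : y ≠ z) : x = y := by
  obtain ⟨u, v, -, rfl⟩ := Finset.card_eq_two.mp h
  simp only [Finset.mem_insert, Finset.mem_singleton] at hx hy hz
  rcases hx with rfl | rfl <;> rcases hy with rfl | rfl <;> rcases hz with rfl | rfl <;> tauto

end Pigeonhole

lemma List.isChain_append_self_map_range {α : Type*} {R : α → α → Prop} {g : ℕ → α} {n : ℕ}
    (hper : ∀ i, g (n + i) = g i) (hR : ∀ i, R (g i) (g (i + 1))) :
    ((List.range n).map g ++ (List.range n).map g).IsChain R := by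
  have hdouble : (List.range n).map g ++ (List.range n).map g = (List.range (n + n)).map g := by
    simp only [List.range_add, List.map_append, List.map_map, Function.comp_def, hper]
  rw [hdouble, List.isChain_map, List.isChain_range]
  exact fun i _ => hR i

section Angulations

variable {m : ℕ} {T : Angulation m}

def Angulation.sidesOf (T : Angulation m) (a : T.Arc) : Finset (T.Gon × ZMod (m + 2)) :=
  Finset.univ.filter fun s => T.side s.1 s.2 = Sum.inl a

lemma Angulation.mem_sidesOf {a : T.Arc} {s : T.Gon × ZMod (m + 2)} :
    s ∈ T.sidesOf a ↔ T.side s.1 s.2 = Sum.inl a := by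
  simp [Angulation.sidesOf]

lemma Angulation.card_sidesOf (a : T.Arc) : (T.sidesOf a).card = 2 := T.arc_two a

namespace AngArrow

protected lemma ext {x y : AngArrow T} (hG : x.G = y.G) (hp : x.p = y.p) : x = y := by
  obtain ⟨G, p, t, s, ht, hs⟩ := x
  obtain ⟨G', p', t', s', ht', hs'⟩ := y
  obtain rfl : G = G' := hG
  obtain rfl : p = p' := hp
  obtain rfl : t = t' := Sum.inl.inj (ht.symm.trans ht')
  obtain rfl : s = s' := Sum.inl.inj (hs.symm.trans hs')
  rfl

def tgtSide (x : AngArrow T) : T.Gon × ZMod (m + 2) := (x.G, x.p)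

def srcSide (x : AngArrow T) : T.Gon × ZMod (m + 2) := (x.G, x.p + 1)

lemma tgtSide_injective : Function.Injective (tgtSide : AngArrow T → _) := fun _ _ h =>
  AngArrow.ext (congrArg Prod.fst h) (congrArg Prod.snd h)

lemma srcSide_injective : Function.Injective (srcSide : AngArrow T → _) := fun _ _ h =>
  AngArrow.ext (congrArg Prod.fst h) (add_right_cancel (congrArg Prod.snd h))

lemma tgtSide_mem_sidesOf (x : AngArrow T) : x.tgtSide ∈ T.sidesOf x.tgtArc :=
  Angulation.mem_sidesOf.mpr x.htgt

lemma srcSide_mem_sidesOf (x : AngArrow T) : x.srcSide ∈ T.sidesOf x.srcArc :=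
  Angulation.mem_sidesOf.mpr x.hsrc

end AngArrow

lemma mem_angRel_iff {α β : AngArrow T} : (α, β) ∈ angRel T ↔ α.tgtSide = β.srcSide := by
  show α.G = β.G ∧ β.p = α.p - 1 ↔ (α.G, α.p) = (β.G, β.p + 1)
  rw [Prod.mk.injEq, eq_sub_iff_add_eq, eq_comm (a := β.p + 1)]

lemma isGentleQuiver_angQuiv : IsGentleQuiver (angQuiv T) (angRel T) where
  composable := by
    rintro ⟨α, β⟩ hR
    have hside : α.tgtSide = β.srcSide := mem_angRel_iff.mp hR
    have hα := Angulation.mem_sidesOf.mp α.tgtSide_mem_sidesOf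
    rw [hside, Angulation.mem_sidesOf.mp β.srcSide_mem_sidesOf] at hα
    exact (Sum.inl.inj hα).symm
  src_two a b c (hab : a.srcArc = b.srcArc) (hac : a.srcArc = c.srcArc) := by
    have hb := b.srcSide_mem_sidesOf
    have hc := c.srcSide_mem_sidesOf
    rw [← hab] at hb
    rw [← hac] at hc
    have inj := @AngArrow.srcSide_injective m T
    exact (Finset.eq_or_eq_or_eq_of_card_eq_two (T.card_sidesOf _) a.srcSide_mem_sidesOf hb hc).imp
      (fun h => inj h) (.imp (fun h => inj h) fun h => inj h)
  tgt_two a b c (hab : a.tgtArc = b.tgtArc) (hac : a.tgtArc = c.tgtArc) := by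
    have hb := b.tgtSide_mem_sidesOf
    have hc := c.tgtSide_mem_sidesOf
    rw [← hab] at hb
    rw [← hac] at hc
    have inj := @AngArrow.tgtSide_injective m T
    exact (Finset.eq_or_eq_or_eq_of_card_eq_two (T.card_sidesOf _) a.tgtSide_mem_sidesOf hb hc).imp
      (fun h => inj h) (.imp (fun h => inj h) fun h => inj h)
  rel_left_unique _ _ _ hR hR' :=
    AngArrow.tgtSide_injective ((mem_angRel_iff.mp hR).trans (mem_angRel_iff.mp hR').symm)
  rel_right_unique _ _ _ hR hR' :=
    AngArrow.srcSide_injective ((mem_angRel_iff.mp hR).symm.trans (mem_angRel_iff.mp hR'))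
  nonrel_left_unique α α' β (h : α.tgtArc = β.srcArc) (h' : α'.tgtArc = β.srcArc) hn hn' := by
    have hα := α.tgtSide_mem_sidesOf
    have hα' := α'.tgtSide_mem_sidesOf
    rw [h] at hα
    rw [h'] at hα'
    refine AngArrow.tgtSide_injective (Finset.eq_of_ne_of_ne_of_card_eq_two
      (T.card_sidesOf _) hα hα' β.srcSide_mem_sidesOf ?_ ?_)
    · exact fun hs => hn (mem_angRel_iff.mpr hs)
    · exact fun hs => hn' (mem_angRel_iff.mpr hs)
  nonrel_right_unique α β β' (h : α.tgtArc = β.srcArc) (h' : α.tgtArc = β'.srcArc) hn hn' := by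
    have hβ := β.srcSide_mem_sidesOf
    have hβ' := β'.srcSide_mem_sidesOf
    rw [← h] at hβ
    rw [← h'] at hβ'
    refine AngArrow.srcSide_injective (Finset.eq_of_ne_of_ne_of_card_eq_two
      (T.card_sidesOf _) hβ hβ' α.tgtSide_mem_sidesOf ?_ ?_)
    · exact fun hs => hn (mem_angRel_iff.mpr hs.symm)
    · exact fun hs => hn' (mem_angRel_iff.mpr hs.symm)

lemma getElem_of_isChain_angRel {l : List (AngArrow T)}
    (hl : l.IsChain fun a b => (a, b) ∈ angRel T) {i : ℕ} (hi : i < l.length) :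
    l[i].G = (l[0]'(i.zero_le.trans_lt hi)).G ∧
      l[i].p = (l[0]'(i.zero_le.trans_lt hi)).p - i := by
  induction i with
  | zero => simp
  | succ i ih =>
    obtain ⟨hG, hp⟩ := ih (Nat.lt_of_succ_lt hi)
    have hrel : l[i].tgtSide = l[i + 1].srcSide :=
      mem_angRel_iff.mp (List.isChain_iff_getElem.mp hl i hi)
    obtain ⟨hG', hp'⟩ := Prod.mk.inj hrel
    refine ⟨hG'.symm.trans hG, ?_⟩
    push_cast
    linear_combination hp - hp'

lemma IsSaturatedCycle.length_eq_of_angRel {l : List (AngArrow T)}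
    (hl : IsSaturatedCycle (angQuiv T) (angRel T) l) : l.length = m + 2 := by
  obtain ⟨hne, hnodup, hchain⟩ := hl
  replace hchain : (l ++ l).IsChain fun a b : AngArrow T => (a, b) ∈ angRel T := hchain
  have hpos : 0 < l.length := List.length_pos_iff.mpr hne
  have hdvd : m + 2 ∣ l.length := by
    have hlen : l.length < (l ++ l).length := by simpa using hpos
    obtain ⟨-, hp⟩ := getElem_of_isChain_angRel hchain hlen
    rw [List.getElem_append_right (le_refl _), List.getElem_append_left hpos] at hp
    simp only [Nat.sub_self] at hp
    exact (ZMod.natCast_eq_zero_iff _ _).mp (sub_eq_self.mp hp.symm)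
  have hle : l.length ≤ m + 2 := by
    have hinj : ∀ x ∈ l, ∀ y ∈ l, x.p = y.p → x = y := by
      intro x hx y hy hxy
      obtain ⟨i, hi, rfl⟩ := List.getElem_of_mem hx
      obtain ⟨j, hj, rfl⟩ := List.getElem_of_mem hy
      exact AngArrow.ext ((getElem_of_isChain_angRel hchain.left_of_append hi).1.trans
        (getElem_of_isChain_angRel hchain.left_of_append hj).1.symm) hxy
    simpa [ZMod.card] using (hnodup.map_on hinj).length_le_card
  exact le_antisymm hle (Nat.le_of_dvd hpos hdvd)

lemma exists_isSaturatedCycle_of_forall_side_eq_inl {G : T.Gon}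
    (hG : ∀ q, ∃ a, T.side G q = Sum.inl a) :
    ∃ c : List (AngArrow T), IsSaturatedCycle (angQuiv T) (angRel T) c ∧
      ∀ x : AngArrow T, x.G = G → x ∈ c := by
  choose arc harc using hG
  let g : ℕ → AngArrow T := fun i => ⟨G, -i, arc _, arc _, harc _, harc _⟩
  have hg : ∀ x : AngArrow T, x.G = G → g (-x.p).val = x := fun x hx =>
    AngArrow.ext hx.symm (by simp [g])
  refine ⟨(List.range (m + 2)).map g, ⟨List.ne_nil_of_length_pos (by simp), ?_, ?_⟩, fun x hx => ?_⟩
  · refine List.nodup_range.map_on fun i hi j hj hij => ?_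
    have hcast : ((i : ℕ) : ZMod (m + 2)) = j := neg_injective (congrArg AngArrow.p hij)
    simpa [ZMod.val_cast_of_lt (List.mem_range.mp hi), ZMod.val_cast_of_lt (List.mem_range.mp hj)]
      using congrArg ZMod.val hcast
  · refine List.isChain_append_self_map_range (fun i => ?_) (fun i => ?_)
    · exact AngArrow.ext rfl (by simp [g])
    · exact ⟨rfl, show -((i + 1 : ℕ) : ZMod (m + 2)) = -(i : ZMod (m + 2)) - 1 by push_cast; ring⟩
  · exact List.mem_map.mpr ⟨_, List.mem_range.mpr (ZMod.val_lt _), hg x hx⟩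

lemma forall_side_eq_inl_of_isChain_angRel {l : List (AngArrow T)}
    (hl : l.IsChain fun a b => (a, b) ∈ angRel T) (hlen : m < l.length) (q : ZMod (m + 2)) :
    ∃ a, T.side (l[0]'(m.zero_le.trans_lt hlen)).G q = Sum.inl a := by
  obtain ⟨x, hx⟩ : ∃ x, l[0]'(m.zero_le.trans_lt hlen) = x := ⟨_, rfl⟩
  rw [hx]
  by_cases hq : q = x.p + 1
  · exact ⟨x.srcArc, hq ▸ x.hsrc⟩
  -- the only target position `x.p - (m + 1)` missed by `m + 1` arrows is `x.p + 1`
  have hval : (x.p - q).val ≤ m := by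
    refine Nat.le_of_lt_succ (lt_of_le_of_ne (Nat.le_of_lt_succ (ZMod.val_lt _)) fun hj => hq ?_)
    have h := ZMod.natCast_zmod_val (x.p - q)
    have h0 := ZMod.natCast_self (m + 2)
    rw [hj] at h
    push_cast at h h0
    linear_combination h - h0
  obtain ⟨j, hjq, hj⟩ : ∃ j : ℕ, (j : ZMod (m + 2)) = x.p - q ∧ j ≤ m :=
    ⟨_, ZMod.natCast_zmod_val _, hval⟩
  obtain ⟨hG, hp⟩ := getElem_of_isChain_angRel hl (hj.trans_lt hlen)
  rw [hx] at hG hp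
  have hq' : q = l[j].p := by rw [hp, hjq]; ring
  exact ⟨l[j].tgtArc, hG ▸ hq' ▸ l[j].htgt⟩

lemma length_le_of_isChain_angRel {l : List (AngArrow T)}
    (hl : l.IsChain fun a b => (a, b) ∈ angRel T)
    (hoff : ∃ a ∈ l, ∀ c, IsSaturatedCycle (angQuiv T) (angRel T) c → a ∉ c) :
    l.length ≤ m := by
  by_contra! hlen
  obtain ⟨a, ha, hnot⟩ := hoff
  obtain ⟨c, hc, hmem⟩ :=
    exists_isSaturatedCycle_of_forall_side_eq_inl (forall_side_eq_inl_of_isChain_angRel hl hlen)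
  obtain ⟨i, hi, rfl⟩ := List.getElem_of_mem ha
  exact hnot c hc (hmem _ (getElem_of_isChain_angRel hl hi).1)

end Angulations

/-- **Proposition.**  Let `(Q_T, I_T)` be the bound quiver of an `(m+2)`-angulation
of an unpunctured marked surface.  Then (1) the algebra `Λ_T = kQ_T/I_T` is gentle;
(2) the only possible saturated cycles are `(m+2)`-cycles; and (3) there are at most
`m - 1` consecutive zero-relations not lying on a saturated cycle. -/
theorem angulation_bound_quiver_properties (m : ℕ) (T : Angulation m) :
    IsGentleQuiver (angQuiv T) (angRel T) ∧
    (∀ l : List (angQuiv T).A,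
      IsSaturatedCycle (angQuiv T) (angRel T) l → l.length = m + 2) ∧
    (∀ l : List (angQuiv T).A, (angQuiv T).IsPath l →
      l.Chain' (fun a b => (a, b) ∈ angRel T) →
      (∃ a ∈ l, ∀ c : List (angQuiv T).A,
        IsSaturatedCycle (angQuiv T) (angRel T) c → a ∉ c) →
      l.length ≤ m) :=
  ⟨isGentleQuiver_angQuiv, fun _ hl => hl.length_eq_of_angRel,
    fun _ _ hl hoff => length_le_of_isChain_angRel hl hoff⟩
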